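/- Let a, b, c : ℝ → ℝ be given coefficient functions, let g0, h0 be nonzero real constants with g0/h0 < 0, and let α, β, γ : ℝ → ℝ be differentiable functions satisfying α'(t) + b(t) + 2c(t)α(t) + 4a(t)α(t)² = 0, β'(t) + (c(t) + 4a(t)α(t))β(t) = 0, γ'(t) + a(t)β(t)² = 0. Suppose d(t) = -2a(t)α(t), g(t) = g0·a(t)·β(t)², h(t) = h0·a(t)·β(t)². Define θ(x,t) = α(t)x² + β(t)x + γ(t). Then the plane-wave functions ψ(x,t) = √(-g0/(2h0))·exp(i·θ(x,t)) and φ(x,t) = √(-g0/(2h0))·exp(-i·θ(x,t)) satisfy the coupled NLS system with variable coefficients: i ψ_t = -a(t) ψ_xx + b(t)x²ψ - i c(t) x ψ_x - i d(t) ψ + g(t) ψ + h(t)(|ψ|²+|φ|²)ψ and i φ_t = a(t) φ_xx - b(t)x²φ - i c(t) x φ_x - i d(t) φ - g(t) φ - h(t)(|ψ|²+|φ|²)φ. -/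

import Mathlib

/-- Partial derivative in the first (space) variable. -/
noncomputable def pderivX (f : ℝ → ℝ → ℂ) (x t : ℝ) : ℂ :=
  deriv (fun x' => f x' t) x

/-- Second partial derivative in the first (space) variable. -/
noncomputable def pderivXX (f : ℝ → ℝ → ℂ) (x t : ℝ) : ℂ :=
  iteratedDeriv 2 (fun x' => f x' t) x

/-- Partial derivative in the second (time) variable. -/
noncomputable def pderivT (f : ℝ → ℝ → ℂ) (x t : ℝ) : ℂ :=
  deriv (fun t' => f x t') t

/-- The coupled NLS system with variable coefficients. -/
def CNLS (a b c d g h : ℝ → ℝ) (ψ φ : ℝ → ℝ → ℂ) : Prop :=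
  ∀ x t : ℝ,
    (Complex.I * pderivT ψ x t =
      -(a t : ℂ) * pderivXX ψ x t + (b t : ℂ) * (x : ℂ) ^ 2 * ψ x t
        - Complex.I * (c t : ℂ) * (x : ℂ) * pderivX ψ x t
        - Complex.I * (d t : ℂ) * ψ x t + (g t : ℂ) * ψ x t
        + (h t : ℂ) * ((‖ψ x t‖ ^ 2 + ‖φ x t‖ ^ 2 : ℝ) : ℂ) * ψ x t)
    ∧ (Complex.I * pderivT φ x t =
      (a t : ℂ) * pderivXX φ x t - (b t : ℂ) * (x : ℂ) ^ 2 * φ x t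
        - Complex.I * (c t : ℂ) * (x : ℂ) * pderivX φ x t
        - Complex.I * (d t : ℂ) * φ x t - (g t : ℂ) * φ x t
        - (h t : ℂ) * ((‖ψ x t‖ ^ 2 + ‖φ x t‖ ^ 2 : ℝ) : ℂ) * φ x t)

/-!
Write `ψ = A e^{iθ}`. Every term of the `ψ`-equation is a multiple of `ψ`: `ψ_t = iθ_t ψ`,
`ψ_x = iθ_x ψ`, `ψ_xx = (iθ_xx - θ_x²) ψ`, and `|ψ|² + |φ|² = 2A² = -g0/h0` is constant.
The imaginary part cancels since `d = -2aα = -aθ_xx`, the cubic term cancels `g` since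
`2hA² = -g`, and what is left is `θ_t + aθ_x² + bx² + cxθ_x = 0`, whose coefficients of
`x²`, `x`, `1` are the three Riccati equations. The `φ`-equation is the same computation with
`i` replaced by `-i`.
-/

open Complex

lemma hasDerivAt_const_mul_cexp_mul_ofReal (A ε : ℂ) {f : ℝ → ℝ} {f' s : ℝ}
    (hf : HasDerivAt f f' s) :
    HasDerivAt (fun s => A * exp (ε * f s)) (ε * f' * (A * exp (ε * f s))) s :=
  ((hf.ofReal_comp.const_mul ε).cexp.const_mul A).congr_deriv (by ring)

lemma iteratedDeriv_two_const_mul_cexp_mul_ofReal (A ε : ℂ) {f f' : ℝ → ℝ} {f'' s : ℝ}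
    (hf : ∀ y, HasDerivAt f (f' y) y) (hf' : HasDerivAt f' f'' s) :
    iteratedDeriv 2 (fun s => A * exp (ε * f s)) s
      = (ε * f'' + (ε * f' s) ^ 2) * (A * exp (ε * f s)) := by
  have hderiv : deriv (fun s => A * exp (ε * f s))
      = fun s => ε * f' s * (A * exp (ε * f s)) :=
    funext fun y => (hasDerivAt_const_mul_cexp_mul_ofReal A ε (hf y)).deriv
  rw [iteratedDeriv_succ, iteratedDeriv_one, hderiv]
  exact (((hf'.ofReal_comp.const_mul ε).mul
    (hasDerivAt_const_mul_cexp_mul_ofReal A ε (hf s))).congr_deriv (by ring)).deriv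

lemma norm_const_mul_cexp_mul_ofReal (A : ℂ) {ε : ℂ} (hε : ε.re = 0) (r : ℝ) :
    ‖A * exp (ε * r)‖ = ‖A‖ := by
  simp [norm_exp, hε]

lemma hasDerivAt_quadratic (p q r x : ℝ) :
    HasDerivAt (fun y => p * y ^ 2 + q * y + r) (2 * p * x + q) x := by
  simpa [mul_comm, mul_left_comm] using
    (((hasDerivAt_pow 2 x).const_mul p).add ((hasDerivAt_id x).const_mul q)).add_const r

noncomputable def quadraticPhaseWave (A ε : ℂ) (α β γ : ℝ → ℝ) (x t : ℝ) : ℂ :=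
  A * exp (ε * (α t * x ^ 2 + β t * x + γ t : ℝ))

lemma quadratic_phase_eikonal {a b c α β γ : ℝ → ℝ} {t : ℝ}
    (hRic1 : deriv α t + b t + 2 * c t * α t + 4 * a t * (α t) ^ 2 = 0)
    (hRic2 : deriv β t + (c t + 4 * a t * α t) * β t = 0)
    (hRic3 : deriv γ t + a t * (β t) ^ 2 = 0) (x : ℝ) :
    (deriv α t * x ^ 2 + deriv β t * x + deriv γ t) + a t * (2 * α t * x + β t) ^ 2
      + b t * x ^ 2 + c t * x * (2 * α t * x + β t) = 0 := by
  linear_combination x ^ 2 * hRic1 + x * hRic2 + hRic3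

/-- For `ε = ±i` this is the `ψ`-equation and the negated `φ`-equation respectively. -/
theorem quadraticPhaseWave_equation {a b c d g h α β γ : ℝ → ℝ} {x t : ℝ}
    (hα : DifferentiableAt ℝ α t) (hβ : DifferentiableAt ℝ β t) (hγ : DifferentiableAt ℝ γ t)
    (hRic1 : deriv α t + b t + 2 * c t * α t + 4 * a t * (α t) ^ 2 = 0)
    (hRic2 : deriv β t + (c t + 4 * a t * α t) * β t = 0)
    (hRic3 : deriv γ t + a t * (β t) ^ 2 = 0)
    (hd : d t = -2 * a t * α t) {N : ℝ} (hN : g t + h t * N = 0)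
    (A : ℂ) {ε : ℂ} (hε : ε ^ 2 = -1) :
    ε * pderivT (quadraticPhaseWave A ε α β γ) x t =
      -(a t : ℂ) * pderivXX (quadraticPhaseWave A ε α β γ) x t
        + (b t : ℂ) * (x : ℂ) ^ 2 * quadraticPhaseWave A ε α β γ x t
        - ε * (c t : ℂ) * (x : ℂ) * pderivX (quadraticPhaseWave A ε α β γ) x t
        - ε * (d t : ℂ) * quadraticPhaseWave A ε α β γ x t
        + (g t : ℂ) * quadraticPhaseWave A ε α β γ x t
        + (h t : ℂ) * (N : ℂ) * quadraticPhaseWave A ε α β γ x t := by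
  set w := quadraticPhaseWave A ε α β γ
  set θt := deriv α t * x ^ 2 + deriv β t * x + deriv γ t
  set θx := 2 * α t * x + β t
  have hT : pderivT w x t = ε * θt * w x t :=
    (hasDerivAt_const_mul_cexp_mul_ofReal A ε
      (((hα.hasDerivAt.mul_const (x ^ 2)).add (hβ.hasDerivAt.mul_const x)).add
        hγ.hasDerivAt)).deriv
  have hX : pderivX w x t = ε * θx * w x t :=
    (hasDerivAt_const_mul_cexp_mul_ofReal A ε (hasDerivAt_quadratic (α t) (β t) (γ t) x)).deriv
  have hXX : pderivXX w x t = (ε * (2 * α t : ℝ) + (ε * θx) ^ 2) * w x t := by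
    have hθxx : HasDerivAt (fun y => 2 * α t * y + β t) (2 * α t) x := by
      simpa using ((hasDerivAt_id x).const_mul (2 * α t)).add_const (β t)
    exact (iteratedDeriv_two_const_mul_cexp_mul_ofReal A ε
      (fun y => hasDerivAt_quadratic (α t) (β t) (γ t) y) hθxx :)
  have hθ : (θt + a t * θx ^ 2 + b t * x ^ 2 + c t * x * θx : ℂ) = 0 := by
    exact_mod_cast quadratic_phase_eikonal hRic1 hRic2 hRic3 x
  have hN' : (g t + h t * N : ℂ) = 0 := by exact_mod_cast hN
  rw [hT, hX, hXX, hd]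
  push_cast
  linear_combination (w x t * (θt + a t * θx ^ 2 + c t * x * θx)) * hε - w x t * hθ
    - w x t * hN'

theorem plane_wave_solutions_general
    (a b c d g h : ℝ → ℝ) (g0 h0 : ℝ)
    (hratio : g0 / h0 < 0)
    (α β γ : ℝ → ℝ)
    (hαdiff : Differentiable ℝ α) (hβdiff : Differentiable ℝ β)
    (hγdiff : Differentiable ℝ γ)
    (hRic1 : ∀ t, deriv α t + b t + 2 * c t * α t + 4 * a t * (α t) ^ 2 = 0)
    (hRic2 : ∀ t, deriv β t + (c t + 4 * a t * α t) * β t = 0)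
    (hRic3 : ∀ t, deriv γ t + a t * (β t) ^ 2 = 0)
    (hd : ∀ t, d t = -2 * a t * α t)
    (hg : ∀ t, g t = g0 * a t * (β t) ^ 2)
    (hh : ∀ t, h t = h0 * a t * (β t) ^ 2)
    (θ : ℝ → ℝ → ℝ) (hθ : ∀ x t, θ x t = α t * x ^ 2 + β t * x + γ t) :
    CNLS a b c d g h
      (fun x t => ((Real.sqrt (-g0 / (2 * h0)) : ℝ) : ℂ)
        * Complex.exp (Complex.I * (θ x t : ℂ)))
      (fun x t => ((Real.sqrt (-g0 / (2 * h0)) : ℝ) : ℂ)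
        * Complex.exp (-(Complex.I * (θ x t : ℂ)))) := by
  obtain rfl : θ = fun x t => α t * x ^ 2 + β t * x + γ t := funext₂ hθ
  simp only [← neg_mul]
  set A : ℝ := Real.sqrt (-g0 / (2 * h0))
  have hh0 : h0 ≠ 0 := by rintro rfl; simp at hratio
  have hA : A ^ 2 = -g0 / (2 * h0) :=
    Real.sq_sqrt (by rw [show -g0 / (2 * h0) = -(g0 / h0) / 2 by ring]; linarith)
  have hnorm : ∀ {ε : ℂ}, ε.re = 0 → ∀ r : ℝ, ‖(A : ℂ) * exp (ε * r)‖ ^ 2 = A ^ 2 := by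
    intro ε hε r
    rw [norm_const_mul_cexp_mul_ofReal _ hε, norm_real, Real.norm_eq_abs, sq_abs]
  intro x t
  dsimp only
  have hN : g t + h t * (A ^ 2 + A ^ 2) = 0 := by
    rw [hg, hh, hA]; field_simp; ring
  have wave := fun {ε : ℂ} (hε : ε ^ 2 = -1) =>
    quadraticPhaseWave_equation (x := x) (hαdiff t) (hβdiff t) (hγdiff t)
      (hRic1 t) (hRic2 t) (hRic3 t) (hd t) hN A hε
  rw [hnorm (by simp) _, hnorm (by simp) _]
  have hφ := wave (ε := -I) (by simp)
  unfold quadraticPhaseWave at hφ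
  exact ⟨wave I_sq, by linear_combination -hφ⟩

/-- The plane-wave solutions of the paper (Hamiltonian level `H0 = g0²/(8h0)`)
solve the variable-coefficient coupled NLS system. -/
theorem plane_wave_solutions
    (a b c d g h : ℝ → ℝ) (g0 h0 : ℝ) (hg0 : g0 ≠ 0) (hh0 : h0 ≠ 0)
    (hratio : g0 / h0 < 0)
    (α β γ : ℝ → ℝ)
    (hαdiff : Differentiable ℝ α) (hβdiff : Differentiable ℝ β)
    (hγdiff : Differentiable ℝ γ)
    (hRic1 : ∀ t, deriv α t + b t + 2 * c t * α t + 4 * a t * (α t) ^ 2 = 0)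
    (hRic2 : ∀ t, deriv β t + (c t + 4 * a t * α t) * β t = 0)
    (hRic3 : ∀ t, deriv γ t + a t * (β t) ^ 2 = 0)
    (hd : ∀ t, d t = -2 * a t * α t)
    (hg : ∀ t, g t = g0 * a t * (β t) ^ 2)
    (hh : ∀ t, h t = h0 * a t * (β t) ^ 2)
    (θ : ℝ → ℝ → ℝ) (hθ : ∀ x t, θ x t = α t * x ^ 2 + β t * x + γ t) :
    CNLS a b c d g h
      (fun x t => ((Real.sqrt (-g0 / (2 * h0)) : ℝ) : ℂ)
        * Complex.exp (Complex.I * (θ x t : ℂ)))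
      (fun x t => ((Real.sqrt (-g0 / (2 * h0)) : ℝ) : ℂ)
        * Complex.exp (-(Complex.I * (θ x t : ℂ)))) :=
  plane_wave_solutions_general a b c d g h g0 h0 hratio α β γ hαdiff hβdiff hγdiff hRic1 hRic2 hRic3
    hd hg hh θ hθ
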